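/- Fix κ > 0, n ≥ 2, p ∈ (1, ∞) with conjugate exponent p', and let v₁, v₂ : ℝ^{n-1} × (0,∞) → ℂ be measurable. Let v_{n-1} denote the volume of the unit ball in ℝ^{n-1}, and for a measurable u on the upper half space define the area function A_κ u(x') := (∫_{Γ_κ(x')} |u(y', t)|² t^{2-n} dy' dt)^{1/2}. Then v_{n-1} κ^{n-1} ∫_{ℝ^{n-1} × (0,∞)} |v₁(y', t)| |v₂(y', t)| t dy' dt ≤ ‖A_κ v₁‖_{L^p(ℝ^{n-1})} ‖A_κ v₂‖_{L^{p'}(ℝ^{n-1})}. -/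

import Mathlib

open MeasureTheory Real Set Filter Topology
open scoped ENNReal NNReal

/-- The nontangential cone `Γ_κ(x') = {(y',t) : t > 0, |x'-y'| < κ t}`. -/
def cone14 (n : ℕ) (κ : ℝ) (x' : EuclideanSpace ℝ (Fin (n - 1))) :
    Set (EuclideanSpace ℝ (Fin (n - 1)) × ℝ) :=
  {p | 0 < p.2 ∧ dist x' p.1 < κ * p.2}

/-- The area function `A_κ u(x') = (∫_{Γ_κ(x')} |u(y',t)|² t^{2-n} dy' dt)^{1/2}`. -/
noncomputable def areaFn14 (n : ℕ) (κ : ℝ)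
    (u : EuclideanSpace ℝ (Fin (n - 1)) × ℝ → ℂ)
    (x' : EuclideanSpace ℝ (Fin (n - 1))) : ℝ≥0∞ :=
  (∫⁻ p in cone14 n κ x',
    (‖u p‖₊ : ℝ≥0∞) ^ 2 * ENNReal.ofReal (p.2 ^ ((2 : ℝ) - n))) ^ ((1 : ℝ) / 2)

/-!
Swap the order of integration: a point `(y', t)` lies in the cone `Γ_κ(x')` exactly for `x'` in
the ball of radius `κ t` about `y'`, of measure `v_{n-1} (κ t)^{n-1}`, and `t^{2-n} t^{n-1} = t`.
So the left side is `∫ (∫_{Γ_κ(x')} |v₁| |v₂| t^{2-n}) dx'`; Cauchy–Schwarz in the cone variable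
bounds the inner integral by `A_κ v₁ (x') A_κ v₂ (x')`, and Hölder in `x'` concludes.
-/

section PreimageSections

variable {X Y : Type*} [MeasurableSpace X] [MeasurableSpace Y] {μ : Measure X} {ν : Measure Y}
  {T : Set (X × Y)} {f : Y → ℝ≥0∞}

theorem setLIntegral_prodMk_preimage (hT : MeasurableSet T) (x : X) :
    ∫⁻ y in Prod.mk x ⁻¹' T, f y ∂ν = ∫⁻ y, T.indicator (f ∘ Prod.snd) (x, y) ∂ν := by
  rw [← lintegral_indicator (measurable_prodMk_left hT)]
  rfl

theorem measurable_setLIntegral_prodMk_preimage [SFinite ν] (hT : MeasurableSet T)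
    (hf : Measurable f) : Measurable fun x => ∫⁻ y in Prod.mk x ⁻¹' T, f y ∂ν := by
  simp_rw [setLIntegral_prodMk_preimage hT]
  exact ((hf.comp measurable_snd).indicator hT).lintegral_prod_right'

theorem lintegral_setLIntegral_prodMk_preimage [SFinite μ] [SFinite ν] (hT : MeasurableSet T)
    (hf : Measurable f) :
    ∫⁻ x, ∫⁻ y in Prod.mk x ⁻¹' T, f y ∂ν ∂μ = ∫⁻ y, f y * μ ((·, y) ⁻¹' T) ∂ν := by
  simp_rw [setLIntegral_prodMk_preimage hT]
  rw [lintegral_lintegral_swap (f := fun x y => T.indicator (f ∘ Prod.snd) (x, y))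
    ((hf.comp measurable_snd).indicator hT).aemeasurable]
  refine lintegral_congr fun y => ?_
  rw [← lintegral_indicator_const (measurable_prodMk_right hT)]
  rfl

end PreimageSections

theorem lintegral_mul_mul_le_sqrt_mul_sqrt {α : Type*} [MeasurableSpace α] (μ : Measure α)
    {f g w : α → ℝ≥0∞} (hf : Measurable f) (hg : Measurable g) (hw : Measurable w) :
    ∫⁻ a, f a * g a * w a ∂μ ≤
      (∫⁻ a, f a ^ 2 * w a ∂μ) ^ (1 / 2 : ℝ) * (∫⁻ a, g a ^ 2 * w a ∂μ) ^ (1 / 2 : ℝ) := by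
  have hw_mul {u : α → ℝ≥0∞} (hu : Measurable u) :
      ∫⁻ a, u a * w a ∂μ = ∫⁻ a, u a ∂μ.withDensity w := by
    rw [lintegral_withDensity_eq_lintegral_mul μ hw hu]
    simp only [Pi.mul_apply, mul_comm]
  rw [hw_mul (u := fun a => f a * g a) (hf.mul hg), hw_mul (u := fun a => f a ^ 2) (hf.pow_const 2),
    hw_mul (u := fun a => g a ^ 2) (hg.pow_const 2)]
  simpa only [ENNReal.rpow_two, Pi.mul_apply] using
    ENNReal.lintegral_mul_le_Lp_mul_Lq _ .two_two hf.aemeasurable hg.aemeasurable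

section Cone

variable {E : Type*} [NormedAddCommGroup E] [NormedSpace ℝ E] [FiniteDimensional ℝ E]
  [MeasurableSpace E] [BorelSpace E] {μ : Measure E} [μ.IsAddHaarMeasure] {κ : ℝ}

def coneIncidence (E : Type*) [PseudoMetricSpace E] (κ : ℝ) : Set (E × (E × ℝ)) :=
  {z | 0 < z.2.2 ∧ dist z.1 z.2.1 < κ * z.2.2}

theorem measurableSet_coneIncidence : MeasurableSet (coneIncidence E κ) :=
  (measurableSet_lt measurable_const measurable_snd.snd).inter
    (measurableSet_lt (measurable_fst.dist measurable_snd.fst)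
      (measurable_const.mul measurable_snd.snd))

theorem addHaar_coneIncidence_preimage (hκ : 0 < κ) (q : E × ℝ) :
    μ ((·, q) ⁻¹' coneIncidence E κ) =
      {q : E × ℝ | 0 < q.2}.indicator
        (fun q => μ (Metric.ball 0 1) * ENNReal.ofReal (κ ^ Module.finrank ℝ E) *
          ENNReal.ofReal (q.2 ^ Module.finrank ℝ E)) q := by
  by_cases hq : 0 < q.2
  · have : (·, q) ⁻¹' coneIncidence E κ = Metric.ball q.1 (κ * q.2) := by
      ext x; simp [coneIncidence, hq]
    rw [this, Measure.addHaar_ball_of_pos μ _ (mul_pos hκ hq),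
      indicator_of_mem (s := {q : E × ℝ | 0 < q.2}) hq, mul_pow,
      ENNReal.ofReal_mul (pow_nonneg hκ.le _)]
    ring
  · have : (·, q) ⁻¹' coneIncidence E κ = ∅ := by
      ext x; simp [coneIncidence, hq]
    rw [this, measure_empty, indicator_of_notMem (s := {q : E × ℝ | 0 < q.2}) hq]

theorem lintegral_setLIntegral_cone {ν : Measure (E × ℝ)} [SFinite ν] (hκ : 0 < κ)
    {f : E × ℝ → ℝ≥0∞} (hf : Measurable f) :
    ∫⁻ x, ∫⁻ q in {q | 0 < q.2 ∧ dist x q.1 < κ * q.2}, f q ∂ν ∂μ =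
      μ (Metric.ball 0 1) * ENNReal.ofReal (κ ^ Module.finrank ℝ E) *
        ∫⁻ q in {q | 0 < q.2}, f q * ENNReal.ofReal (q.2 ^ Module.finrank ℝ E) ∂ν := by
  refine (lintegral_setLIntegral_prodMk_preimage measurableSet_coneIncidence hf).trans ?_
  rw [← lintegral_const_mul' _ _ (ENNReal.mul_ne_top measure_ball_lt_top.ne ENNReal.ofReal_ne_top),
    ← lintegral_indicator (measurableSet_lt measurable_const measurable_snd)]
  refine lintegral_congr fun q => ?_
  rw [addHaar_coneIncidence_preimage hκ, ← indicator_mul_right]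
  congr 1 with q
  ring

end Cone

theorem measurable_areaFn14 {n : ℕ} {κ : ℝ} {u : EuclideanSpace ℝ (Fin (n - 1)) × ℝ → ℂ}
    (hu : Measurable u) : Measurable (areaFn14 n κ u) :=
  (measurable_setLIntegral_prodMk_preimage measurableSet_coneIncidence
    ((hu.nnnorm.coe_nnreal_ennreal.pow_const 2).mul
      (measurable_snd.pow_const _).ennreal_ofReal)).pow_const _

/-- `v_{n-1} κ^{n-1} ∬ |v₁||v₂| t dy' dt ≤ ‖A_κ v₁‖_{L^p} ‖A_κ v₂‖_{L^{p'}}` where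
`v_{n-1}` is the volume of the unit ball in `ℝ^{n-1}` and `1/p + 1/p' = 1`. -/
theorem stmt14 (n : ℕ) (hn : 2 ≤ n) (κ : ℝ) (hκ : 0 < κ) (p p' : ℝ)
    (hp : 1 < p) (hpp' : 1 / p + 1 / p' = 1)
    (v₁ v₂ : EuclideanSpace ℝ (Fin (n - 1)) × ℝ → ℂ)
    (hv₁ : Measurable v₁) (hv₂ : Measurable v₂) :
    ENNReal.ofReal
        ((volume (Metric.ball (0 : EuclideanSpace ℝ (Fin (n - 1))) 1)).toReal *
          κ ^ (n - 1)) *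
      ∫⁻ q in {q : EuclideanSpace ℝ (Fin (n - 1)) × ℝ | 0 < q.2},
        (‖v₁ q‖₊ : ℝ≥0∞) * (‖v₂ q‖₊ : ℝ≥0∞) * ENNReal.ofReal q.2
    ≤ (∫⁻ x', areaFn14 n κ v₁ x' ^ p) ^ (1 / p) *
      (∫⁻ x', areaFn14 n κ v₂ x' ^ p') ^ (1 / p') := by
  have hpq : p.HolderConjugate p' :=
    Real.holderConjugate_iff.mpr ⟨hp, by simpa only [one_div] using hpp'⟩
  set w : EuclideanSpace ℝ (Fin (n - 1)) × ℝ → ℝ≥0∞ := fun q => ENNReal.ofReal (q.2 ^ ((2 : ℝ) - n))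
  have hw : Measurable w := (measurable_snd.pow_const _).ennreal_ofReal
  have hv : Measurable fun q => (‖v₁ q‖₊ : ℝ≥0∞) * ‖v₂ q‖₊ :=
    hv₁.nnnorm.coe_nnreal_ennreal.mul hv₂.nnnorm.coe_nnreal_ennreal
  have h_weight : ∀ q ∈ {q : EuclideanSpace ℝ (Fin (n - 1)) × ℝ | 0 < q.2},
      ENNReal.ofReal q.2 = w q * ENNReal.ofReal (q.2 ^ (n - 1)) := fun q (hq : 0 < q.2) => by
    rw [← ENNReal.ofReal_mul (Real.rpow_nonneg hq.le _), ← Real.rpow_natCast,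
      ← Real.rpow_add hq, Nat.cast_sub (by omega), Nat.cast_one]
    norm_num
  calc _ = volume (Metric.ball (0 : EuclideanSpace ℝ (Fin (n - 1))) 1) *
          ENNReal.ofReal (κ ^ (n - 1)) * ∫⁻ q in {q | 0 < q.2},
            (‖v₁ q‖₊ : ℝ≥0∞) * ‖v₂ q‖₊ * w q * ENNReal.ofReal (q.2 ^ (n - 1)) := by
        rw [ENNReal.ofReal_mul ENNReal.toReal_nonneg, ENNReal.ofReal_toReal measure_ball_lt_top.ne,
          setLIntegral_congr_fun (measurableSet_lt measurable_const measurable_snd)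
            fun q hq => by rw [h_weight q hq, ← mul_assoc]]
    _ = ∫⁻ x', ∫⁻ q in cone14 n κ x', (‖v₁ q‖₊ : ℝ≥0∞) * ‖v₂ q‖₊ * w q := by
        refine Eq.symm ((lintegral_setLIntegral_cone hκ (hv.mul hw)).trans ?_)
        rw [finrank_euclideanSpace_fin]
        rfl
    _ ≤ ∫⁻ x', areaFn14 n κ v₁ x' * areaFn14 n κ v₂ x' :=
        lintegral_mono fun x' => lintegral_mul_mul_le_sqrt_mul_sqrt _
          hv₁.nnnorm.coe_nnreal_ennreal hv₂.nnnorm.coe_nnreal_ennreal hw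
    _ ≤ _ := ENNReal.lintegral_mul_le_Lp_mul_Lq volume hpq
        (measurable_areaFn14 hv₁).aemeasurable (measurable_areaFn14 hv₂).aemeasurable
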